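/- Let f : A → B be a morphism of finite-dimensional ℚ-mixed Hodge structures. Then f is strictly compatible with the weight filtration W; consequently, the functors Gr^W_i commute with kernels and cokernels: Gr^W_i(ker f) = ker(Gr^W_i f) and Gr^W_i(coker f) = coker(Gr^W_i f) for all i. -/

import Mathlib

/-!
STATEMENT 19: Every morphism `f : A → B` of finite-dimensional ℚ-mixed Hodge
structures is strictly compatible with the weight filtration `W`
(`f(A) ∩ W_iB = f(W_iA)`); consequently `Gr^W_i` commutes with kernels and
cokernels: `Gr^W_i(ker f) = ker(Gr^W_i f)` and
`Gr^W_i(coker f) = coker(Gr^W_i f)`.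

Formalization: a mixed ℚ-Hodge structure on a finite-dimensional ℚ-vector
space `V` is an increasing, exhaustive weight filtration `W` by
ℚ-subspaces together with a decreasing, exhaustive Hodge filtration `F` by
ℂ-subspaces of `ℂ ⊗_ℚ V`, such that for each `n` the filtration induced by
`F` on the complexification of `Gr^W_n = W_n/W_{n-1}` is `n`-opposed to its
complex conjugate: `F^p ⊕ conj(F^q) = Gr^W_n ⊗ ℂ` whenever `p + q = n + 1`.
Morphisms are ℚ-linear maps preserving `W` and (after `ℂ ⊗_ℚ -`) `F`.
-/

open scoped TensorProduct

/-- Complex conjugation on `ℂ ⊗_ℚ V`, as a ℚ-linear map. -/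
noncomputable def conjTensor (V : Type) [AddCommGroup V] [Module ℚ V] :
    (ℂ ⊗[ℚ] V) →ₗ[ℚ] (ℂ ⊗[ℚ] V) :=
  TensorProduct.map (Complex.conjAe.toLinearMap.restrictScalars ℚ) LinearMap.id

/-- The complex conjugate of a ℂ-subspace of `ℂ ⊗_ℚ V`. -/
noncomputable def conjSubmodule {V : Type} [AddCommGroup V] [Module ℚ V]
    (S : Submodule ℂ (ℂ ⊗[ℚ] V)) : Submodule ℂ (ℂ ⊗[ℚ] V) :=
  Submodule.span ℂ (conjTensor V '' (S : Set (ℂ ⊗[ℚ] V)))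

/-- `Gr^W_n = W_n / W_{n-1}`. -/
abbrev GrW {V : Type} [AddCommGroup V] [Module ℚ V]
    (W : ℤ → Submodule ℚ V) (n : ℤ) :=
  W n ⧸ (Submodule.comap (W n).subtype (W (n - 1)))

/-- The filtration induced by `F` on `ℂ ⊗_ℚ Gr^W_n`. -/
noncomputable def inducedF {V : Type} [AddCommGroup V] [Module ℚ V]
    (W : ℤ → Submodule ℚ V) (F : ℤ → Submodule ℂ (ℂ ⊗[ℚ] V)) (n p : ℤ) :
    Submodule ℂ (ℂ ⊗[ℚ] GrW W n) :=
  Submodule.map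
    (LinearMap.baseChange ℂ (Submodule.comap (W n).subtype (W (n - 1))).mkQ)
    (Submodule.comap (LinearMap.baseChange ℂ (W n).subtype) (F p))

/-- The axioms of a finite-dimensional mixed ℚ-Hodge structure `(V, W, F)`. -/
structure IsMHS {V : Type} [AddCommGroup V] [Module ℚ V]
    [FiniteDimensional ℚ V]
    (W : ℤ → Submodule ℚ V) (F : ℤ → Submodule ℂ (ℂ ⊗[ℚ] V)) : Prop where
  mono : Monotone W
  w_bot : ∃ n, W n = ⊥
  w_top : ∃ n, W n = ⊤
  anti : Antitone F
  f_bot : ∃ p, F p = ⊥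
  f_top : ∃ p, F p = ⊤
  /-- purity: on `ℂ ⊗ Gr^W_n` the filtrations `F` and `conj F` are
  `n`-opposed, i.e. `Gr^W_n` is a pure Hodge structure of weight `n`. -/
  pure : ∀ n p q : ℤ, p + q = n + 1 →
    IsCompl (inducedF W F n p) (conjSubmodule (inducedF W F n q))

/-- The map `Gr^W_i f : Gr^W_i A → Gr^W_i B` induced by a filtered map `f`. -/
noncomputable def grMap {V₁ V₂ : Type}
    [AddCommGroup V₁] [Module ℚ V₁] [AddCommGroup V₂] [Module ℚ V₂]
    (W₁ : ℤ → Submodule ℚ V₁) (W₂ : ℤ → Submodule ℚ V₂)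
    (f : V₁ →ₗ[ℚ] V₂) (hW : ∀ i : ℤ, ∀ x ∈ W₁ i, f x ∈ W₂ i) (i : ℤ) :
    GrW W₁ i →ₗ[ℚ] GrW W₂ i :=
  Submodule.mapQ _ _ (f.restrict (hW i)) (fun x hx => hW (i - 1) x.1 hx)

/-- `Gr^W_i` of the kernel of a filtered map, with its induced filtration. -/
abbrev grKer {V₁ V₂ : Type}
    [AddCommGroup V₁] [Module ℚ V₁] [AddCommGroup V₂] [Module ℚ V₂]
    (W₁ : ℤ → Submodule ℚ V₁) (f : V₁ →ₗ[ℚ] V₂) (i : ℤ) :=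
  (↥(W₁ i ⊓ LinearMap.ker f)) ⧸
    (Submodule.comap (W₁ i ⊓ LinearMap.ker f).subtype
      (W₁ (i - 1) ⊓ LinearMap.ker f))

/-- `Gr^W_i` of the cokernel of a filtered map, with its induced filtration. -/
abbrev grCoker {V₁ V₂ : Type}
    [AddCommGroup V₁] [Module ℚ V₁] [AddCommGroup V₂] [Module ℚ V₂]
    (W₂ : ℤ → Submodule ℚ V₂) (f : V₁ →ₗ[ℚ] V₂) (i : ℤ) :=
  (↥(Submodule.map (LinearMap.range f).mkQ (W₂ i))) ⧸
    (Submodule.comap (Submodule.map (LinearMap.range f).mkQ (W₂ i)).subtype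
      (Submodule.map (LinearMap.range f).mkQ (W₂ (i - 1))))


open Submodule

namespace DelSplit

variable {R M : Type*} [CommRing R] [AddCommGroup M] [Module R M]

/-- The correction space in Deligne's `I^{p,q}`. -/
noncomputable def SS (W G : ℤ → Submodule R M) (p q : ℤ) : Submodule R M :=
  (G q ⊓ W (p + q)) ⊔ ⨆ j : ℕ, (G (q - 1 - (j : ℤ)) ⊓ W (p + q - 2 - (j : ℤ)))

/-- Deligne's `I^{p,q}`. -/
noncomputable def II (W F G : ℤ → Submodule R M) (p q : ℤ) : Submodule R M :=
  F p ⊓ W (p + q) ⊓ SS W G p q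

/-- Hypotheses: two filtrations opposed on each graded piece. -/
structure Hyp (W F G : ℤ → Submodule R M) : Prop where
  wmono : Monotone W
  wbot : ∃ b, W b = ⊥
  fbot : ∃ p, F p = ⊥
  ftop : ∃ p, F p = ⊤
  fanti : Antitone F
  ganti : Antitone G
  pureA : ∀ p q n : ℤ, p + q = n + 1 →
    W n ≤ (F p ⊓ W n) ⊔ ((G q ⊓ W n) ⊔ W (n - 1))
  pureB : ∀ p q n : ℤ, p + q = n + 1 →
    (F p ⊓ W n) ⊓ ((G q ⊓ W n) ⊔ W (n - 1)) ≤ W (n - 1)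

variable {W F G : ℤ → Submodule R M}

/-- Upward induction on `ℤ` from a base `b`, with everything below `b` given. -/
lemma int_induction_from {b : ℤ} {P : ℤ → Prop} (h0 : ∀ m ≤ b, P m)
    (hstep : ∀ m, b ≤ m → P m → P (m + 1)) : ∀ m, P m := by
  have key : ∀ k : ℕ, P (b + k) := by
    intro k
    induction k with
    | zero => simpa using h0 b le_rfl
    | succ k ih =>
      have := hstep (b + k) (by omega) ih
      have he : b + (k + 1 : ℕ) = b + k + 1 := by push_cast; ring
      rwa [he]
  intro m
  rcases le_total m b with hm | hm
  · exact h0 m hm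
  · have := key (m - b).toNat
    rwa [show b + ((m - b).toNat : ℤ) = m by omega] at this



lemma Hyp.w_eq_bot (h : Hyp W F G) {b m : ℤ} (hb : W b = ⊥) (hm : m ≤ b) :
    W m = ⊥ := le_bot_iff.mp (hb ▸ h.wmono hm)

lemma G_inf_W_le_SS (h : Hyp W F G) {p q m : ℤ} (hm : m ≤ p + q - 1) :
    G (m + 1 - p) ⊓ W m ≤ SS W G p q := by
  rcases eq_or_lt_of_le hm with he | hlt
  · -- m = p+q-1
    have h1 : m + 1 - p = q := by omega
    have h2 : G (m + 1 - p) ⊓ W m ≤ G q ⊓ W (p + q) := by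
      rw [h1]; exact inf_le_inf le_rfl (h.wmono (by omega))
    exact h2.trans le_sup_left
  · -- m ≤ p+q-2
    set j : ℕ := (p + q - 2 - m).toNat with hj
    have hjz : (j : ℤ) = p + q - 2 - m := Int.toNat_of_nonneg (by omega)
    have h1 : G (m + 1 - p) ⊓ W m ≤ G (q - 1 - (j : ℤ)) ⊓ W (p + q - 2 - (j : ℤ)) := by
      rw [hjz]
      have : q - 1 - (p + q - 2 - m) = m + 1 - p := by ring
      rw [this]
      exact inf_le_inf le_rfl (h.wmono (by omega))
    exact le_sup_of_le_right (h1.trans (le_iSup (fun j : ℕ => G (q - 1 - (j:ℤ)) ⊓ W (p + q - 2 - (j:ℤ))) j))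

lemma SS_le_G_sup_W (h : Hyp W F G) {p q m' : ℤ} (hm' : m' ≤ p + q - 1) :
    SS W G p q ≤ G (m' + 1 - p) ⊔ W (m' - 1) := by
  refine sup_le ?_ (iSup_le fun j => ?_)
  · exact le_sup_of_le_left (inf_le_left.trans (h.ganti (by omega)))
  · rcases le_or_gt (m' : ℤ) (p + q - 2 - (j:ℤ)) with hc | hc
    · exact le_sup_of_le_left (inf_le_left.trans (h.ganti (by omega)))
    · exact le_sup_of_le_right (inf_le_right.trans (h.wmono (by omega)))

lemma II_le_W (p q : ℤ) : II W F G p q ≤ W (p + q) := inf_le_left.trans inf_le_right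

lemma II_le_F (p q : ℤ) : II W F G p q ≤ F p := inf_le_left.trans inf_le_left

lemma II_le_SS (p q : ℤ) : II W F G p q ≤ SS W G p q := inf_le_right

lemma II_le_G_sup_W (h : Hyp W F G) (p q : ℤ) :
    II W F G p q ≤ (G q ⊓ W (p + q)) ⊔ W (p + q - 2) := by
  refine (II_le_SS p q).trans (sup_le le_sup_left (iSup_le fun j => ?_))
  exact le_sup_of_le_right (inf_le_right.trans (h.wmono (by omega)))

/-- The lifting lemma: an element of `F^p ∩ W_n` lying in `SS + W_m` lies in
`I^{p,q} + W_{n-1}`. -/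
lemma lift (h : Hyp W F G) (p q : ℤ) :
    ∀ m, m ≤ p + q - 1 → ∀ x, x ∈ F p ⊓ W (p + q) → x ∈ SS W G p q ⊔ W m →
      x ∈ II W F G p q ⊔ W (p + q - 1) := by
  obtain ⟨b, hb⟩ := h.wbot
  have bot_case : ∀ m, W m = ⊥ → ∀ x, x ∈ F p ⊓ W (p + q) → x ∈ SS W G p q ⊔ W m →
      x ∈ II W F G p q ⊔ W (p + q - 1) := by
    intro m hm x hx hxs
    rw [hm, sup_bot_eq] at hxs
    exact mem_sup_left ⟨hx, hxs⟩
  refine int_induction_from (b := b) (fun m hmb => ?_) (fun m hbm ih => ?_)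
  · exact fun _ => bot_case m (h.w_eq_bot hb hmb)
  · intro hm1 x hx hxs
    rw [mem_sup] at hxs
    obtain ⟨s, hs, w, hw, hswx⟩ := hxs
    have hpA := h.pureA p (m + 2 - p) (m + 1) (by ring)
    have hw2 := hpA hw
    rw [mem_sup] at hw2
    obtain ⟨u, hu, v, hv, huvw⟩ := hw2
    rw [mem_sup] at hv
    obtain ⟨g, hg, w', hw', hgw⟩ := hv
    have hw'' : w' ∈ W m := by rwa [show m + 1 - 1 = m by ring] at hw'
    have hgSS : g ∈ SS W G p q := by
      have hle : G (m + 1 + 1 - p) ⊓ W (m + 1) ≤ SS W G p q :=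
        G_inf_W_le_SS h (by omega)
      exact hle (by simpa [show m + 1 + 1 - p = m + 2 - p by ring] using hg)
    have hxu : x - u ∈ F p ⊓ W (p + q) :=
      ⟨sub_mem hx.1 hu.1, sub_mem hx.2 (h.wmono (by omega : m + 1 ≤ p + q) hu.2)⟩
    have hxus : x - u ∈ SS W G p q ⊔ W m := by
      rw [mem_sup]
      refine ⟨s + g, add_mem hs hgSS, w', hw'', ?_⟩
      rw [← hswx, ← huvw, ← hgw]; abel
    have hmain := ih (by omega) (x - u) hxu hxus
    have hu' : u ∈ II W F G p q ⊔ W (p + q - 1) :=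
      mem_sup_right (h.wmono (by omega : m + 1 ≤ p + q - 1) hu.2)
    simpa using add_mem hmain hu'

/-- `I^{p,q} ∩ W_m = 0` for `m ≤ p+q-1`. -/
lemma disj (h : Hyp W F G) (p q : ℤ) :
    ∀ m, m ≤ p + q - 1 → II W F G p q ⊓ W m = ⊥ := by
  obtain ⟨b, hb⟩ := h.wbot
  refine int_induction_from (b := b) (fun m hmb _ => ?_) (fun m hbm ih hm1 => ?_)
  · rw [h.w_eq_bot hb hmb, inf_bot_eq]
  · rw [eq_bot_iff]
    intro x hx
    have hxF : x ∈ F p := hx.1.1.1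
    have hxSS : x ∈ SS W G p q := hx.1.2
    have hxm1 : x ∈ W (m + 1) := hx.2
    have hSG : x ∈ G (m + 1 + 1 - p) ⊔ W (m + 1 - 1) :=
      SS_le_G_sup_W h (by omega : m + 1 ≤ p + q - 1) hxSS
    rw [mem_sup] at hSG
    obtain ⟨g, hg, w, hw, hgwx⟩ := hSG
    have hw' : w ∈ W m := by rwa [show m + 1 - 1 = m by ring] at hw
    have hgW : g ∈ W (m + 1) := by
      have : g = x - w := by rw [← hgwx]; abel
      rw [this]
      exact sub_mem hxm1 (h.wmono (by omega) hw')
    have hxmem : x ∈ (F p ⊓ W (m + 1)) ⊓ ((G (m + 2 - p) ⊓ W (m + 1)) ⊔ W (m + 1 - 1)) := by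
      refine ⟨⟨hxF, hxm1⟩, mem_sup.mpr ?_⟩
      exact ⟨g, ⟨by rwa [show m + 2 - p = m + 1 + 1 - p by ring], hgW⟩, w, hw, hgwx⟩
    have hxWm : x ∈ W m := by
      have := h.pureB p (m + 2 - p) (m + 1) (by ring) hxmem
      rwa [show m + 1 - 1 = m by ring] at this
    have : x ∈ II W F G p q ⊓ W m := ⟨hx.1, hxWm⟩
    rw [ih (by omega)] at this
    exact this

/-- Spanning of each graded piece by the `I^{p,q}` with `p+q = n`. -/
lemma stepA (h : Hyp W F G) (n : ℤ) :
    ∀ (k : ℕ) (pt : ℤ), F pt = ⊥ →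
      F (pt - k) ⊓ W n ≤ (⨆ p : ℤ, II W F G p (n - p)) ⊔ W (n - 1) := by
  intro k
  induction k with
  | zero =>
    intro pt hpt
    simp only [Nat.cast_zero, sub_zero]
    rw [hpt, bot_inf_eq]
    exact bot_le
  | succ k ih =>
    intro pt hpt
    set p : ℤ := pt - (k + 1 : ℕ) with hp
    intro x hx
    have hxW : x ∈ W n := hx.2
    have hpA := h.pureA (p + 1) (n - p) n (by ring) hxW
    rw [mem_sup] at hpA
    obtain ⟨u, hu, v, hv, huvx⟩ := hpA
    have hup1 : p + 1 = pt - (k : ℕ) := by push_cast [hp]; ring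
    have huIn : u ∈ (⨆ p : ℤ, II W F G p (n - p)) ⊔ W (n - 1) := by
      apply ih pt hpt
      rwa [← hup1]
    -- v = x - u ∈ F p ⊓ W n and v ∈ (G (n-p) ⊓ W n) ⊔ W (n-1)
    have hvF : v ∈ F p := by
      have : v = x - u := by rw [← huvx]; abel
      rw [this]
      exact sub_mem hx.1 (h.fanti (by omega : p ≤ p + 1) hu.1)
    have hvW : v ∈ W n := by
      have : v = x - u := by rw [← huvx]; abel
      rw [this]
      exact sub_mem hxW hu.2
    have hvSS : v ∈ SS W G p (n - p) ⊔ W (n - 1) := by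
      rw [mem_sup] at hv ⊢
      obtain ⟨g, hg, w, hw, hgwv⟩ := hv
      refine ⟨g, ?_, w, hw, hgwv⟩
      have hfirst : G (n - p) ⊓ W (p + (n - p)) ≤ SS W G p (n - p) := le_sup_left
      exact hfirst ⟨hg.1, by rw [show p + (n - p) = n by ring]; exact hg.2⟩
    have hvI : v ∈ II W F G p (n - p) ⊔ W (p + (n - p) - 1) := by
      apply lift h p (n - p) (n - 1) (by omega) v
      · exact ⟨hvF, by rw [show p + (n - p) = n by ring]; exact hvW⟩
      · exact hvSS
    rw [show p + (n - p) = n by ring] at hvI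
    have hvI' : v ∈ (⨆ p : ℤ, II W F G p (n - p)) ⊔ W (n - 1) := by
      rw [mem_sup] at hvI ⊢
      obtain ⟨a, ha, w, hw, hawv⟩ := hvI
      exact ⟨a, le_iSup (fun p : ℤ => II W F G p (n - p)) p ha, w, hw, hawv⟩
    rw [← huvx]
    exact add_mem huIn hvI'

lemma step_span (h : Hyp W F G) (n : ℤ) :
    W n ≤ (⨆ p : ℤ, II W F G p (n - p)) ⊔ W (n - 1) := by
  obtain ⟨pt, hpt⟩ := h.fbot
  obtain ⟨pl, hpl⟩ := h.ftop
  have hpl2 : F (min pl pt) = ⊤ :=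
    top_le_iff.mp (hpl ▸ h.fanti (min_le_left pl pt))
  have hk : min pl pt = pt - ((pt - min pl pt).toNat : ℤ) := by
    have : (0:ℤ) ≤ pt - min pl pt := by
      have := min_le_right pl pt; omega
    omega
  have := stepA h n (pt - min pl pt).toNat pt hpt
  rw [← hk, hpl2, top_inf_eq] at this
  exact this

/-- Full spanning: `W n` is contained in the span of all the `I^{p,q}`. -/
lemma span_II (h : Hyp W F G) : ∀ n, W n ≤ ⨆ pq : ℤ × ℤ, II W F G pq.1 pq.2 := by
  obtain ⟨b, hb⟩ := h.wbot
  refine int_induction_from (b := b) (fun m hmb => ?_) (fun m hbm ih => ?_)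
  · rw [h.w_eq_bot hb hmb]; exact bot_le
  · refine (step_span h (m + 1)).trans (sup_le ?_ ?_)
    · refine iSup_le fun p => ?_
      exact le_iSup (fun pq : ℤ × ℤ => II W F G pq.1 pq.2) (p, m + 1 - p)
    · rwa [show m + 1 - 1 = m by ring]

/-- Graded independence: elements of `I^{p, n-p}` summing into `W_{n-1}` all lie
in `W_{n-1}`. -/
lemma ind (h : Hyp W F G) (n : ℤ) :
    ∀ (t : Finset ℤ) (z : ℤ → M), (∀ p ∈ t, z p ∈ II W F G p (n - p)) →
      (∑ p ∈ t, z p) ∈ W (n - 1) → ∀ p ∈ t, z p ∈ W (n - 1) := by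
  intro t
  induction t using Finset.strongInduction with
  | _ t iht =>
    intro z hz hsum p hp
    have hne : t.Nonempty := ⟨p, hp⟩
    set ps : ℤ := t.max' hne with hps
    have hpst : ps ∈ t := t.max'_mem hne
    -- every element of t.erase ps lies in (G (n - ps + 1) ⊓ W n) ⊔ W (n-1)
    have herase : ∀ p' ∈ t.erase ps, z p' ∈ (G (n - ps + 1) ⊓ W n) ⊔ W (n - 1) := by
      intro p' hp'
      have hlt : p' < ps := lt_of_le_of_ne (t.le_max' p' (Finset.mem_of_mem_erase hp'))
        (Finset.ne_of_mem_erase hp')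
      have h1 : z p' ∈ (G (n - p') ⊓ W (p' + (n - p'))) ⊔ W (p' + (n - p') - 2) :=
        II_le_G_sup_W h p' (n - p') (hz p' (Finset.mem_of_mem_erase hp'))
      rw [show p' + (n - p') = n by ring] at h1
      rw [mem_sup] at h1 ⊢
      obtain ⟨g, hg, w, hw, hgw⟩ := h1
      exact ⟨g, ⟨h.ganti (by omega) hg.1, hg.2⟩, w, h.wmono (by omega) hw, hgw⟩
    have hsum_erase : (∑ p' ∈ t.erase ps, z p') ∈ (G (n - ps + 1) ⊓ W n) ⊔ W (n - 1) :=
      Submodule.sum_mem _ fun p' hp' => herase p' hp'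
    have hzps : z ps ∈ (G (n - ps + 1) ⊓ W n) ⊔ W (n - 1) := by
      have heq : z ps = (∑ p' ∈ t, z p') - ∑ p' ∈ t.erase ps, z p' := by
        rw [Finset.sum_erase_eq_sub hpst]; abel
      rw [heq]
      exact sub_mem (mem_sup_right hsum) hsum_erase
    have hzpsW : z ps ∈ W (n - 1) := by
      have hzmem := hz ps hpst
      have hFW : z ps ∈ F ps ⊓ W n := by
        refine ⟨(II_le_F ps (n - ps)) hzmem, ?_⟩
        have := (II_le_W ps (n - ps)) hzmem
        rwa [show ps + (n - ps) = n by ring] at this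
      exact h.pureB ps (n - ps + 1) n (by ring) ⟨hFW, hzps⟩
    rcases eq_or_ne p ps with rfl | hne'
    · exact hzpsW
    · have hsum' : (∑ p' ∈ t.erase ps, z p') ∈ W (n - 1) := by
        have heq : (∑ p' ∈ t.erase ps, z p') = (∑ p' ∈ t, z p') - z ps := by
          rw [Finset.sum_erase_eq_sub hpst]
        rw [heq]
        exact sub_mem hsum hzpsW
      exact iht (t.erase ps) (Finset.erase_ssubset hpst) z
        (fun p' hp' => hz p' (Finset.mem_of_mem_erase hp')) hsum' p
        (Finset.mem_erase.mpr ⟨hne', hp⟩)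

/-- If a sum of elements of the `I^{p,q}` with `p + q > i` lies in `W i`, it is zero. -/
lemma e2 (h : Hyp W F G) (i : ℤ) :
    ∀ (s : Finset (ℤ × ℤ)) (y : ℤ × ℤ → M), (∀ pq ∈ s, y pq ∈ II W F G pq.1 pq.2) →
      (∀ pq ∈ s, i < pq.1 + pq.2) → (∑ pq ∈ s, y pq) ∈ W i → (∑ pq ∈ s, y pq) = 0 := by
  intro s
  induction s using Finset.strongInduction with
  | _ s ihs =>
    intro y hy hgt hsum
    rcases Finset.eq_empty_or_nonempty s with rfl | hne
    · simp
    · have hne' : (s.image fun pq : ℤ × ℤ => pq.1 + pq.2).Nonempty := hne.image _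
      set n : ℤ := (s.image fun pq : ℤ × ℤ => pq.1 + pq.2).max' hne' with hn
      obtain ⟨pq0, hpq0, hpq0n⟩ := Finset.mem_image.mp ((s.image fun pq : ℤ × ℤ => pq.1 + pq.2).max'_mem hne')
      have hin : i < n := by rw [hn, ← hpq0n]; exact hgt pq0 hpq0
      have hmax : ∀ pq ∈ s, pq.1 + pq.2 ≤ n := fun pq hpq => by
        rw [hn]
        exact Finset.le_max' (s.image fun pq : ℤ × ℤ => pq.1 + pq.2) _
          (Finset.mem_image_of_mem _ hpq)
      set sn : Finset (ℤ × ℤ) := s.filter (fun pq => pq.1 + pq.2 = n) with hsn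
      set sr : Finset (ℤ × ℤ) := s.filter (fun pq => ¬pq.1 + pq.2 = n) with hsr
      have hsplit : (∑ pq ∈ sn, y pq) + (∑ pq ∈ sr, y pq) = ∑ pq ∈ s, y pq :=
        Finset.sum_filter_add_sum_filter_not s _ y
      have hsrW : (∑ pq ∈ sr, y pq) ∈ W (n - 1) := by
        refine Submodule.sum_mem _ fun pq hpq => ?_
        have hmem := Finset.mem_filter.mp hpq
        have h1 := (II_le_W pq.1 pq.2) (hy pq hmem.1)
        exact h.wmono (by have := hmax pq hmem.1; omega) h1
      have hsnW : (∑ pq ∈ sn, y pq) ∈ W (n - 1) := by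
        have : (∑ pq ∈ sn, y pq) = (∑ pq ∈ s, y pq) - ∑ pq ∈ sr, y pq := by
          rw [← hsplit]; abel
        rw [this]
        exact sub_mem (h.wmono (by omega) hsum) hsrW
      -- reindex sn by first coordinates
      set t : Finset ℤ := sn.image Prod.fst with ht
      have hsn_eq : ∀ pq ∈ sn, pq = (pq.1, n - pq.1) := by
        intro pq hpq
        have h2 := (Finset.mem_filter.mp hpq).2
        exact Prod.ext rfl (by simp only; omega)
      have hinj : ∀ pq ∈ sn, ∀ pq' ∈ sn, pq.1 = pq'.1 → pq = pq' := by
        intro pq hpq pq' hpq' hfst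
        rw [hsn_eq pq hpq, hsn_eq pq' hpq', hfst]
      set z : ℤ → M := fun p => y (p, n - p) with hzdef
      have hsum_t : (∑ p ∈ t, z p) = ∑ pq ∈ sn, y pq := by
        rw [ht, Finset.sum_image hinj]
        refine Finset.sum_congr rfl fun pq hpq => ?_
        conv_rhs => rw [hsn_eq pq hpq]
      have hzI : ∀ p ∈ t, z p ∈ II W F G p (n - p) := by
        intro p hp
        obtain ⟨pq, hpq, rfl⟩ := Finset.mem_image.mp hp
        have hmem := hy pq (Finset.mem_filter.mp hpq).1
        have h2 : pq.2 = n - pq.1 := by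
          have := (Finset.mem_filter.mp hpq).2
          omega
        show y (pq.1, n - pq.1) ∈ II W F G pq.1 (n - pq.1)
        rw [← h2]
        simpa using hmem
      have hallW : ∀ p ∈ t, z p ∈ W (n - 1) :=
        ind h n t z hzI (hsum_t ▸ hsnW)
      have hzero : ∀ pq ∈ sn, y pq = 0 := by
        intro pq hpq
        have hp : pq.1 ∈ t := Finset.mem_image_of_mem _ hpq
        have h1 : y pq ∈ W (n - 1) := by
          have hthis := hallW pq.1 hp
          have h2 : pq.2 = n - pq.1 := by
            have := (Finset.mem_filter.mp hpq).2
            omega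
          have : y (pq.1, n - pq.1) ∈ W (n - 1) := hthis
          rw [← h2] at this
          simpa using this
        have h2 : y pq ∈ II W F G pq.1 pq.2 ⊓ W (n - 1) :=
          ⟨hy pq (Finset.mem_filter.mp hpq).1, h1⟩
        rwa [disj h pq.1 pq.2 (n - 1)
          (by have := (Finset.mem_filter.mp hpq).2; omega), mem_bot] at h2
      have hsn0 : (∑ pq ∈ sn, y pq) = 0 :=
        Finset.sum_eq_zero hzero
      have hss : sr ⊂ s := by
        refine Finset.filter_ssubset.mpr ?_
        exact ⟨pq0, hpq0, by simp [hpq0n, hn]⟩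
      have hsum_sr : (∑ pq ∈ sr, y pq) ∈ W i := by
        have : (∑ pq ∈ sr, y pq) = ∑ pq ∈ s, y pq := by
          rw [← hsplit, hsn0, zero_add]
        rwa [this]
      have := ihs sr hss y (fun pq hpq => hy pq (Finset.mem_filter.mp hpq).1)
        (fun pq hpq => hgt pq (Finset.mem_filter.mp hpq).1) hsum_sr
      rw [← hsplit, hsn0, zero_add, this]

/-- `φ` maps `I₁^{p,q}` into `I₂^{p,q}`. -/
lemma map_II {M₂ : Type*} [AddCommGroup M₂] [Module R M₂]
    {W₂ F₂ G₂ : ℤ → Submodule R M₂} (φ : M →ₗ[R] M₂)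
    (hφW : ∀ n, Submodule.map φ (W n) ≤ W₂ n)
    (hφF : ∀ p, Submodule.map φ (F p) ≤ F₂ p)
    (hφG : ∀ q, Submodule.map φ (G q) ≤ G₂ q) (p q : ℤ) :
    Submodule.map φ (II W F G p q) ≤ II W₂ F₂ G₂ p q := by
  refine le_inf (le_inf ?_ ?_) ?_
  · exact (Submodule.map_mono (inf_le_left.trans inf_le_left)).trans (hφF p)
  · exact (Submodule.map_mono (inf_le_left.trans inf_le_right)).trans (hφW (p + q))
  · refine (Submodule.map_mono (inf_le_right : _ ≤ SS W G p q)).trans ?_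
    rw [SS, Submodule.map_sup, Submodule.map_iSup]
    refine sup_le ?_ (iSup_le fun j => ?_)
    · refine le_sup_of_le_left ?_
      exact (Submodule.map_inf_le φ).trans (inf_le_inf (hφG q) (hφW (p + q)))
    · refine le_sup_of_le_right ?_
      refine le_iSup_of_le j ?_
      exact (Submodule.map_inf_le φ).trans (inf_le_inf (hφG _) (hφW _))

/-- Abstract strictness. -/
theorem strict {M₂ : Type*} [AddCommGroup M₂] [Module R M₂]
    {W₂ F₂ G₂ : ℤ → Submodule R M₂}
    (h₁ : Hyp W F G) (h₂ : Hyp W₂ F₂ G₂) (hwtop : ∃ t, W t = ⊤)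
    (φ : M →ₗ[R] M₂)
    (hφW : ∀ n, Submodule.map φ (W n) ≤ W₂ n)
    (hφF : ∀ p, Submodule.map φ (F p) ≤ F₂ p)
    (hφG : ∀ q, Submodule.map φ (G q) ≤ G₂ q) (i : ℤ) :
    LinearMap.range φ ⊓ W₂ i ≤ Submodule.map φ (W i) := by
  rintro y ⟨⟨x, rfl⟩, hyW⟩
  obtain ⟨t, ht⟩ := hwtop
  have hx : x ∈ ⨆ pq : ℤ × ℤ, II W F G pq.1 pq.2 :=
    span_II h₁ t (ht.symm ▸ mem_top)
  rw [Submodule.mem_iSup_iff_exists_finsupp] at hx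
  obtain ⟨f, hf, hfsum⟩ := hx
  classical
  set s : Finset (ℤ × ℤ) := f.support with hs
  set slo : Finset (ℤ × ℤ) := s.filter (fun pq => pq.1 + pq.2 ≤ i) with hslo
  set shi : Finset (ℤ × ℤ) := s.filter (fun pq => ¬pq.1 + pq.2 ≤ i) with hshi
  set x' : M := ∑ pq ∈ slo, f pq with hx'
  have hx'W : x' ∈ W i := by
    refine Submodule.sum_mem _ fun pq hpq => ?_
    have h1 := (II_le_W pq.1 pq.2) (hf pq)
    exact h₁.wmono (Finset.mem_filter.mp hpq).2 h1
  have hxsplit : x' + (∑ pq ∈ shi, f pq) = x := by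
    rw [hx', Finset.sum_filter_add_sum_filter_not]
    rw [Finsupp.sum] at hfsum
    exact hfsum
  -- the high-weight part of φ x
  have hkey : (∑ pq ∈ shi, φ (f pq)) = 0 := by
    refine e2 h₂ i shi (fun pq => φ (f pq)) ?_ ?_ ?_
    · intro pq _
      exact map_II φ hφW hφF hφG pq.1 pq.2 ⟨f pq, hf pq, rfl⟩
    · intro pq hpq
      have := (Finset.mem_filter.mp hpq).2
      omega
    · have hsum_eq : (∑ pq ∈ shi, φ (f pq)) = φ x - φ x' := by
        rw [← map_sum, ← map_sub]
        congr 1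
        rw [← hxsplit]
        abel
      rw [hsum_eq]
      exact sub_mem hyW (hφW i ⟨x', hx'W, rfl⟩)
  have : φ x = φ x' := by
    have h1 : φ x = φ x' + ∑ pq ∈ shi, φ (f pq) := by
      rw [← map_sum, ← map_add, hxsplit]
    rw [h1, hkey, add_zero]
  rw [this]
  exact ⟨x', hx'W, rfl⟩

end DelSplit


namespace MHSAux

open TensorProduct

variable {V V₂ : Type} [AddCommGroup V] [Module ℚ V] [AddCommGroup V₂] [Module ℚ V₂]

lemma conjTensor_tmul (c : ℂ) (v : V) :
    conjTensor V (c ⊗ₜ[ℚ] v) = (starRingEnd ℂ) c ⊗ₜ[ℚ] v := by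
  simp [conjTensor]

lemma conjTensor_conjTensor (x : ℂ ⊗[ℚ] V) : conjTensor V (conjTensor V x) = x := by
  induction x using TensorProduct.induction_on with
  | zero => simp
  | tmul c v => simp [conjTensor_tmul]
  | add x y hx hy => rw [map_add, map_add, hx, hy]

lemma conjTensor_smul (c : ℂ) (x : ℂ ⊗[ℚ] V) :
    conjTensor V (c • x) = (starRingEnd ℂ) c • conjTensor V x := by
  induction x using TensorProduct.induction_on with
  | zero => simp
  | tmul a v =>
    rw [smul_tmul', conjTensor_tmul, conjTensor_tmul, smul_tmul']
    simp [smul_eq_mul]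
  | add x y hx hy => rw [smul_add, map_add, hx, hy, map_add, smul_add]

/-- The conjugate of a `ℂ`-submodule as a bundled submodule (the image itself is
already a submodule). -/
noncomputable def conjSub (S : Submodule ℂ (ℂ ⊗[ℚ] V)) : Submodule ℂ (ℂ ⊗[ℚ] V) where
  carrier := conjTensor V '' (S : Set (ℂ ⊗[ℚ] V))
  add_mem' := by
    rintro a b ⟨x, hx, rfl⟩ ⟨y, hy, rfl⟩
    exact ⟨x + y, S.add_mem hx hy, map_add _ _ _⟩
  zero_mem' := ⟨0, S.zero_mem, map_zero _⟩
  smul_mem' := by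
    rintro c a ⟨x, hx, rfl⟩
    refine ⟨(starRingEnd ℂ) c • x, S.smul_mem _ hx, ?_⟩
    rw [conjTensor_smul]
    simp

lemma conjSubmodule_eq_conjSub (S : Submodule ℂ (ℂ ⊗[ℚ] V)) :
    conjSubmodule S = conjSub S := by
  apply le_antisymm
  · rw [conjSubmodule]
    exact Submodule.span_le.mpr (fun x hx => hx)
  · intro x hx
    exact Submodule.subset_span hx

lemma mem_conjSubmodule {S : Submodule ℂ (ℂ ⊗[ℚ] V)} {x : ℂ ⊗[ℚ] V} :
    x ∈ conjSubmodule S ↔ conjTensor V x ∈ S := by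
  rw [conjSubmodule_eq_conjSub]
  constructor
  · rintro ⟨y, hy, rfl⟩
    rwa [conjTensor_conjTensor]
  · intro h
    exact ⟨conjTensor V x, h, conjTensor_conjTensor x⟩

lemma conjSubmodule_mono {S T : Submodule ℂ (ℂ ⊗[ℚ] V)} (h : S ≤ T) :
    conjSubmodule S ≤ conjSubmodule T := fun _ hx =>
  mem_conjSubmodule.mpr (h (mem_conjSubmodule.mp hx))

lemma conjTensor_baseChange (g : V →ₗ[ℚ] V₂) (x : ℂ ⊗[ℚ] V) :
    conjTensor V₂ (g.baseChange ℂ x) = g.baseChange ℂ (conjTensor V x) := by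
  induction x using TensorProduct.induction_on with
  | zero => simp
  | tmul c v => simp [LinearMap.baseChange_tmul, conjTensor_tmul]
  | add x y hx hy =>
    rw [map_add, map_add, hx, hy, map_add, map_add]

/-- Base change of an injective `ℚ`-linear map is injective. -/
lemma baseChange_injective (g : V →ₗ[ℚ] V₂) (hg : Function.Injective g) :
    Function.Injective (g.baseChange ℂ) := by
  have h := Module.Flat.lTensor_preserves_injective_linearMap (M := ℂ) g hg
  intro x y hxy
  apply h
  rw [← LinearMap.baseChange_eq_ltensor]
  exact hxy

lemma baseChange_surjective (g : V →ₗ[ℚ] V₂) (hg : Function.Surjective g) :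
    Function.Surjective (g.baseChange ℂ) := by
  have h := LinearMap.lTensor_surjective (N := V) (P := V₂) ℂ hg
  intro y
  obtain ⟨x, hx⟩ := h y
  exact ⟨x, by rw [← hx, LinearMap.baseChange_eq_ltensor]⟩

/-- The complexified weight filtration, as the range of the base-changed
inclusion. -/
noncomputable def WC (W : ℤ → Submodule ℚ V) (n : ℤ) : Submodule ℂ (ℂ ⊗[ℚ] V) :=
  LinearMap.range ((W n).subtype.baseChange ℂ)

lemma WC_mono {W : ℤ → Submodule ℚ V} (hW : Monotone W) : Monotone (WC W) := by
  intro m n hmn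
  have hcomp : (W n).subtype ∘ₗ Submodule.inclusion (hW hmn) = (W m).subtype :=
    Submodule.subtype_comp_inclusion _ _ _
  rw [WC, WC, ← hcomp, LinearMap.baseChange_comp, LinearMap.range_comp]
  exact Submodule.map_mono le_top |>.trans (by rw [Submodule.map_top])

lemma subtype_eq_zero {S : Submodule ℚ V} (hS : S = ⊥) : S.subtype = 0 := by
  ext x
  have : x.1 ∈ (⊥ : Submodule ℚ V) := hS ▸ x.2
  simp_all

lemma WC_bot {W : ℤ → Submodule ℚ V} {b : ℤ} (hb : W b = ⊥) : WC W b = ⊥ := by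
  rw [WC, subtype_eq_zero hb, LinearMap.baseChange_zero, LinearMap.range_zero]

lemma WC_top {W : ℤ → Submodule ℚ V} {t : ℤ} (ht : W t = ⊤) : WC W t = ⊤ := by
  rw [WC, LinearMap.range_eq_top]
  apply baseChange_surjective
  intro v
  exact ⟨⟨v, ht ▸ Submodule.mem_top⟩, rfl⟩

lemma one_tmul_eq_zero {M : Type*} [AddCommGroup M] [Module ℚ M] (w : M)
    (hw : (1 : ℂ) ⊗ₜ[ℚ] w = 0) : w = 0 := by
  obtain ⟨N, hN⟩ := Submodule.exists_isCompl (Submodule.span ℚ {(1 : ℂ)})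
  set eqv := LinearEquiv.toSpanNonzeroSingleton ℚ ℂ 1 one_ne_zero with heqv
  set φ : ℂ →ₗ[ℚ] ℚ :=
    (eqv.symm : (Submodule.span ℚ {(1 : ℂ)}) →ₗ[ℚ] ℚ) ∘ₗ
      Submodule.linearProjOfIsCompl _ _ hN with hφ
  have h1 : (1 : ℂ) ∈ Submodule.span ℚ {(1 : ℂ)} := Submodule.mem_span_singleton_self 1
  have hφ1 : φ 1 = 1 := by
    have hproj := Submodule.linearProjOfIsCompl_apply_left hN ⟨1, h1⟩
    have : φ 1 = eqv.symm ⟨1, h1⟩ := by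
      rw [hφ]
      simp only [LinearMap.coe_comp, Function.comp_apply, LinearEquiv.coe_coe]
      exact congrArg eqv.symm hproj
    rw [this, LinearEquiv.symm_apply_eq, heqv]
    exact (LinearEquiv.toSpanNonzeroSingleton_one ℚ ℂ 1 one_ne_zero).symm
  set ψ : ℂ ⊗[ℚ] M →ₗ[ℚ] M :=
    (TensorProduct.lid ℚ M).toLinearMap ∘ₗ TensorProduct.map φ LinearMap.id with hψ
  have hψw : ψ ((1 : ℂ) ⊗ₜ[ℚ] w) = w := by
    rw [hψ]
    simp [hφ1]
  rw [hw, map_zero] at hψw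
  exact hψw.symm

/-- Descent: if `1 ⊗ v` lies in the complexification of `S`, then `v ∈ S`. -/
lemma descend {S : Submodule ℚ V} {v : V}
    (hv : (1 : ℂ) ⊗ₜ[ℚ] v ∈ LinearMap.range (S.subtype.baseChange ℂ)) : v ∈ S := by
  obtain ⟨u, hu⟩ := hv
  have hcomp : S.mkQ ∘ₗ S.subtype = 0 := by
    ext x
    simp [Submodule.Quotient.mk_eq_zero]
  have h0 : (S.mkQ.baseChange ℂ) ((1 : ℂ) ⊗ₜ[ℚ] v) = 0 := by
    rw [← hu, ← LinearMap.comp_apply, ← LinearMap.baseChange_comp, hcomp,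
      LinearMap.baseChange_zero, LinearMap.zero_apply]
  rw [LinearMap.baseChange_tmul] at h0
  have := one_tmul_eq_zero _ h0
  rwa [← Submodule.Quotient.mk_eq_zero, ← Submodule.mkQ_apply]

section Purity

variable {W : ℤ → Submodule ℚ V} {F : ℤ → Submodule ℂ (ℂ ⊗[ℚ] V)}

lemma ker_pi (n : ℤ) :
    LinearMap.ker ((Submodule.comap (W n).subtype (W (n - 1))).mkQ.baseChange ℂ) =
      LinearMap.range
        ((Submodule.comap (W n).subtype (W (n - 1))).subtype.baseChange ℂ) := by
  set Wn' := Submodule.comap (W n).subtype (W (n - 1)) with hWn'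
  have hex : Function.Exact (Wn'.subtype.lTensor ℂ) (Wn'.mkQ.lTensor ℂ) :=
    Module.Flat.lTensor_exact ℂ (LinearMap.exact_subtype_mkQ Wn')
  ext x
  rw [LinearMap.mem_ker]
  constructor
  · intro hx
    have h0 : (Wn'.mkQ.lTensor ℂ) x = 0 := by
      rw [← LinearMap.baseChange_eq_ltensor]
      exact hx
    obtain ⟨u, hu⟩ := (hex x).mp h0
    exact ⟨u, by rw [LinearMap.baseChange_eq_ltensor]; exact hu⟩
  · rintro ⟨u, rfl⟩
    have : (Wn'.mkQ.lTensor ℂ) ((Wn'.subtype.lTensor ℂ) u) = 0 :=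
      (hex _).mpr ⟨u, rfl⟩
    rw [LinearMap.baseChange_eq_ltensor, LinearMap.baseChange_eq_ltensor]
    exact this

lemma map_e_ker (hmono : Monotone W) (n : ℤ) :
    Submodule.map ((W n).subtype.baseChange ℂ)
      (LinearMap.ker ((Submodule.comap (W n).subtype (W (n - 1))).mkQ.baseChange ℂ)) =
      WC W (n - 1) := by
  rw [ker_pi]
  set Wn' := Submodule.comap (W n).subtype (W (n - 1)) with hWn'
  have hle : W (n - 1) ≤ W n := hmono (by omega)
  have hcomp : (W n).subtype ∘ₗ Wn'.subtype =
      (W (n - 1)).subtype ∘ₗ (Submodule.comapSubtypeEquivOfLe hle).toLinearMap := by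
    ext x
    rfl
  rw [← LinearMap.range_comp, ← LinearMap.baseChange_comp, hcomp,
    LinearMap.baseChange_comp, LinearMap.range_comp]
  have hsurj : Function.Surjective
      ((Submodule.comapSubtypeEquivOfLe hle).toLinearMap.baseChange ℂ) :=
    baseChange_surjective _ (Submodule.comapSubtypeEquivOfLe hle).surjective
  rw [LinearMap.range_eq_top.mpr hsurj, Submodule.map_top]
  rfl

lemma conj_inducedF (n q : ℤ) :
    conjSubmodule (inducedF W F n q) =
      Submodule.map ((Submodule.comap (W n).subtype (W (n - 1))).mkQ.baseChange ℂ)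
        (Submodule.comap ((W n).subtype.baseChange ℂ) (conjSubmodule (F q))) := by
  ext x
  rw [mem_conjSubmodule]
  constructor
  · intro hx
    rw [inducedF] at hx
    obtain ⟨u, hu, hux⟩ := hx
    have hu' : ((W n).subtype.baseChange ℂ) u ∈ F q := hu
    refine ⟨conjTensor _ u, ?_, ?_⟩
    · show ((W n).subtype.baseChange ℂ) (conjTensor _ u) ∈ conjSubmodule (F q)
      rw [mem_conjSubmodule, ← conjTensor_baseChange, conjTensor_conjTensor]
      exact hu'
    · rw [← conjTensor_baseChange, hux, conjTensor_conjTensor]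
  · rintro ⟨u, hu, rfl⟩
    have hu' : ((W n).subtype.baseChange ℂ) u ∈ conjSubmodule (F q) := hu
    rw [mem_conjSubmodule] at hu'
    rw [conjTensor_baseChange] at hu'
    rw [inducedF]
    refine ⟨conjTensor _ u, hu', ?_⟩
    rw [← conjTensor_baseChange]

/-- Translation of the purity hypothesis to statements inside `ℂ ⊗ V`. -/
lemma purity_in_space (hmono : Monotone W) {n p q : ℤ}
    (hc : IsCompl (inducedF W F n p) (conjSubmodule (inducedF W F n q))) :
    ((F p ⊓ WC W n) ⊔ ((conjSubmodule (F q) ⊓ WC W n) ⊔ WC W (n - 1)) = WC W n) ∧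
      (((F p ⊓ WC W n) ⊔ WC W (n - 1)) ⊓
        ((conjSubmodule (F q) ⊓ WC W n) ⊔ WC W (n - 1)) = WC W (n - 1)) := by
  set Wn' := Submodule.comap (W n).subtype (W (n - 1)) with hWn'
  set e := (W n).subtype.baseChange ℂ with he_def
  set π := Wn'.mkQ.baseChange ℂ with hπ_def
  have he : Function.Injective e :=
    baseChange_injective _ (Submodule.injective_subtype _)
  have hπ : Function.Surjective π :=
    baseChange_surjective _ (Submodule.mkQ_surjective _)
  set A := Submodule.comap e (F p) with hA
  set B := Submodule.comap e (conjSubmodule (F q)) with hB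
  have hIp : inducedF W F n p = Submodule.map π A := rfl
  have hIq : conjSubmodule (inducedF W F n q) = Submodule.map π B := conj_inducedF n q
  have hrange : LinearMap.range e = WC W n := rfl
  have hmapA : Submodule.map e A = F p ⊓ WC W n := by
    rw [hA, Submodule.map_comap_eq, hrange, inf_comm]
  have hmapB : Submodule.map e B = conjSubmodule (F q) ⊓ WC W n := by
    rw [hB, Submodule.map_comap_eq, hrange, inf_comm]
  have hmapK : Submodule.map e (LinearMap.ker π) = WC W (n - 1) := map_e_ker hmono n
  constructor
  · -- sup part
    have h1 : Submodule.map π (A ⊔ B) = ⊤ := by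
      rw [Submodule.map_sup, ← hIp, ← hIq]
      exact hc.sup_eq_top
    have h2 : (A ⊔ B) ⊔ LinearMap.ker π = ⊤ := by
      have := congrArg (Submodule.comap π) h1
      rwa [Submodule.comap_map_eq, Submodule.comap_top] at this
    have h3 := congrArg (Submodule.map e) h2
    rw [Submodule.map_sup, Submodule.map_sup, Submodule.map_top, hrange,
      hmapA, hmapB, hmapK, sup_assoc] at h3
    exact h3
  · -- inf part
    have h1 : Submodule.map π A ⊓ Submodule.map π B = ⊥ := by
      rw [← hIp, ← hIq]
      exact hc.inf_eq_bot
    have h2 : (A ⊔ LinearMap.ker π) ⊓ (B ⊔ LinearMap.ker π) = LinearMap.ker π := by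
      have := congrArg (Submodule.comap π) h1
      rwa [Submodule.comap_inf, Submodule.comap_map_eq, Submodule.comap_map_eq,
        Submodule.comap_bot] at this
    have h3 := congrArg (Submodule.map e) h2
    rwa [Submodule.map_inf _ he, Submodule.map_sup, Submodule.map_sup,
      hmapA, hmapB, hmapK] at h3

end Purity

/-- The abstract hypotheses hold for a mixed Hodge structure. -/
lemma hyp_of_isMHS [FiniteDimensional ℚ V] {W : ℤ → Submodule ℚ V}
    {F : ℤ → Submodule ℂ (ℂ ⊗[ℚ] V)} (h : IsMHS W F) :
    DelSplit.Hyp (WC W) F (fun q => conjSubmodule (F q)) := by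
  refine ⟨WC_mono h.mono, ?_, h.f_bot, h.f_top, h.anti,
    fun a b hab => conjSubmodule_mono (h.anti hab), ?_, ?_⟩
  · obtain ⟨b, hb⟩ := h.w_bot
    exact ⟨b, WC_bot hb⟩
  · intro p q n hpq
    exact le_of_eq (purity_in_space h.mono (h.pure n p q hpq)).1.symm
  · intro p q n hpq
    have h2 := (purity_in_space h.mono (h.pure n p q hpq)).2
    calc (F p ⊓ WC W n) ⊓ ((conjSubmodule (F q) ⊓ WC W n) ⊔ WC W (n - 1))
        ≤ ((F p ⊓ WC W n) ⊔ WC W (n - 1)) ⊓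
            ((conjSubmodule (F q) ⊓ WC W n) ⊔ WC W (n - 1)) :=
          inf_le_inf le_sup_left le_rfl
      _ = WC W (n - 1) := h2

lemma map_WC_le (f : V →ₗ[ℚ] V₂) {S : Submodule ℚ V} {T : Submodule ℚ V₂}
    (hST : ∀ x ∈ S, f x ∈ T) :
    Submodule.map (f.baseChange ℂ) (LinearMap.range (S.subtype.baseChange ℂ)) ≤
      LinearMap.range (T.subtype.baseChange ℂ) := by
  rw [← LinearMap.range_comp, ← LinearMap.baseChange_comp]
  have hcomp : f ∘ₗ S.subtype = T.subtype ∘ₗ f.restrict hST := by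
    ext x
    rfl
  rw [hcomp, LinearMap.baseChange_comp, LinearMap.range_comp]
  exact (Submodule.map_mono le_top).trans (by rw [Submodule.map_top])

lemma map_conj_le (f : V →ₗ[ℚ] V₂) {S : Submodule ℂ (ℂ ⊗[ℚ] V)}
    {T : Submodule ℂ (ℂ ⊗[ℚ] V₂)}
    (hST : Submodule.map (f.baseChange ℂ) S ≤ T) :
    Submodule.map (f.baseChange ℂ) (conjSubmodule S) ≤ conjSubmodule T := by
  rintro _ ⟨x, hx, rfl⟩
  replace hx : x ∈ conjSubmodule S := hx
  rw [mem_conjSubmodule] at hx ⊢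
  rw [conjTensor_baseChange]
  exact hST ⟨conjTensor V x, hx, rfl⟩

/-- Deligne: morphisms of mixed Hodge structures are strict for `W`. -/
theorem strictness {V₁ V₂ : Type}
    [AddCommGroup V₁] [Module ℚ V₁] [FiniteDimensional ℚ V₁]
    [AddCommGroup V₂] [Module ℚ V₂] [FiniteDimensional ℚ V₂]
    {W₁ : ℤ → Submodule ℚ V₁} {F₁ : ℤ → Submodule ℂ (ℂ ⊗[ℚ] V₁)}
    {W₂ : ℤ → Submodule ℚ V₂} {F₂ : ℤ → Submodule ℂ (ℂ ⊗[ℚ] V₂)}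
    (h₁ : IsMHS W₁ F₁) (h₂ : IsMHS W₂ F₂)
    (f : V₁ →ₗ[ℚ] V₂)
    (hW : ∀ i : ℤ, ∀ x ∈ W₁ i, f x ∈ W₂ i)
    (hF : ∀ p : ℤ, Submodule.map (LinearMap.baseChange ℂ f) (F₁ p) ≤ F₂ p) (i : ℤ) :
    LinearMap.range f ⊓ W₂ i = Submodule.map f (W₁ i) := by
  apply le_antisymm
  · rintro y ⟨⟨u, rfl⟩, hyW⟩
    have hy1 : (1 : ℂ) ⊗ₜ[ℚ] f u ∈ LinearMap.range (f.baseChange ℂ) :=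
      ⟨(1 : ℂ) ⊗ₜ[ℚ] u, by rw [LinearMap.baseChange_tmul]⟩
    have hy2 : (1 : ℂ) ⊗ₜ[ℚ] f u ∈ WC W₂ i :=
      ⟨(1 : ℂ) ⊗ₜ[ℚ] (⟨f u, hyW⟩ : W₂ i), by rw [LinearMap.baseChange_tmul]; rfl⟩
    obtain ⟨t, ht⟩ := h₁.w_top
    have hst := DelSplit.strict (hyp_of_isMHS h₁) (hyp_of_isMHS h₂)
      ⟨t, WC_top ht⟩ (f.baseChange ℂ)
      (fun n => map_WC_le f (hW n)) hF (fun q => map_conj_le f (hF q)) i ⟨hy1, hy2⟩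
    obtain ⟨ξ, hξ, hfξ⟩ := hst
    obtain ⟨η, rfl⟩ := hξ
    apply descend (S := Submodule.map f (W₁ i))
    have hres : ∀ x ∈ W₁ i, f x ∈ Submodule.map f (W₁ i) :=
      fun x hx => Submodule.mem_map_of_mem hx
    have hcomp : (Submodule.map f (W₁ i)).subtype ∘ₗ f.restrict hres =
        f ∘ₗ (W₁ i).subtype := by
      ext x
      rfl
    refine ⟨(f.restrict hres).baseChange ℂ η, ?_⟩
    rw [← LinearMap.comp_apply, ← LinearMap.baseChange_comp, hcomp,
      LinearMap.baseChange_comp, LinearMap.comp_apply]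
    exact hfξ
  · rintro _ ⟨x, hx, rfl⟩
    exact ⟨⟨x, rfl⟩, hW i x hx⟩


section Counting

open Module

variable {X : Type*} [AddCommGroup X] [Module ℚ X] [FiniteDimensional ℚ X]

omit [FiniteDimensional ℚ X] in
lemma finrank_comap_subtype (A B : Submodule ℚ X) :
    finrank ℚ (Submodule.comap A.subtype B) = finrank ℚ ↥(B ⊓ A) := by
  have he : Submodule.comap A.subtype B = Submodule.comap A.subtype (B ⊓ A) := by
    ext x
    simp only [Submodule.mem_comap, Submodule.mem_inf]
    exact ⟨fun h => ⟨h, x.2⟩, fun h => h.1⟩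
  rw [he]
  exact (Submodule.comapSubtypeEquivOfLe inf_le_right).finrank_eq

lemma finrank_quot_comap (A B : Submodule ℚ X) :
    finrank ℚ (↥A ⧸ Submodule.comap A.subtype B) + finrank ℚ ↥(B ⊓ A) =
      finrank ℚ ↥A := by
  rw [← finrank_comap_subtype A B]
  exact Submodule.finrank_quotient_add_finrank _

lemma finrank_map_mkQ (p S : Submodule ℚ X) :
    finrank ℚ ↥(Submodule.map p.mkQ S) + finrank ℚ ↥(p ⊓ S) = finrank ℚ ↥S := by
  set φ : ↥S →ₗ[ℚ] X ⧸ p := p.mkQ ∘ₗ S.subtype with hφ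
  have hrange : LinearMap.range φ = Submodule.map p.mkQ S := by
    rw [hφ, LinearMap.range_comp, Submodule.range_subtype]
  have hker : LinearMap.ker φ = Submodule.comap S.subtype p := by
    rw [hφ, LinearMap.ker_comp, Submodule.ker_mkQ]
  have := LinearMap.finrank_range_add_finrank_ker φ
  rw [hrange, hker, finrank_comap_subtype] at this
  exact this

end Counting

open Module in
/-- Rank count for the kernel of the graded map, given strictness in weight `i-1`. -/
lemma ker_grMap_count {V₁ V₂ : Type}
    [AddCommGroup V₁] [Module ℚ V₁] [FiniteDimensional ℚ V₁]
    [AddCommGroup V₂] [Module ℚ V₂] [FiniteDimensional ℚ V₂]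
    (W₁ : ℤ → Submodule ℚ V₁) (W₂ : ℤ → Submodule ℚ V₂)
    (f : V₁ →ₗ[ℚ] V₂) (hW : ∀ i : ℤ, ∀ x ∈ W₁ i, f x ∈ W₂ i) (i : ℤ)
    (hmono : Monotone W₁)
    (hstrict : LinearMap.range f ⊓ W₂ (i - 1) = Submodule.map f (W₁ (i - 1))) :
    finrank ℚ ↥(LinearMap.ker (grMap W₁ W₂ f hW i)) +
      finrank ℚ ↥(W₁ (i - 1) ⊓ LinearMap.ker f) =
      finrank ℚ ↥(W₁ i ⊓ LinearMap.ker f) := by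
  classical
  set K := LinearMap.ker f with hKdef
  set Q₁ := Submodule.comap (W₁ i).subtype (W₁ (i - 1)) with hQ₁
  set S := Submodule.comap (W₁ i).subtype (Submodule.comap f (W₂ (i - 1))) with hS
  have hker : LinearMap.ker (grMap W₁ W₂ f hW i) = Submodule.map Q₁.mkQ S := by
    unfold grMap Submodule.mapQ
    rw [Submodule.ker_liftQ, LinearMap.ker_comp, Submodule.ker_mkQ]
    rfl
  have e2 := finrank_map_mkQ Q₁ S
  have hQ₁S : Q₁ ⊓ S = Q₁ := by
    rw [inf_eq_left]
    intro x hx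
    exact hW (i - 1) x.1 hx
  have e3 : finrank ℚ ↥S =
      finrank ℚ ↥(Submodule.comap f (W₂ (i - 1)) ⊓ W₁ i) := finrank_comap_subtype _ _
  have e4 : Submodule.comap f (W₂ (i - 1)) ⊓ W₁ i = W₁ (i - 1) ⊔ (W₁ i ⊓ K) := by
    apply le_antisymm
    · rintro x ⟨hx1, hx2⟩
      have hfx : f x ∈ Submodule.map f (W₁ (i - 1)) := by
        rw [← hstrict]
        exact ⟨⟨x, rfl⟩, hx1⟩
      obtain ⟨z, hz, hzx⟩ := hfx
      rw [Submodule.mem_sup]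
      refine ⟨z, hz, x - z, ⟨sub_mem hx2 (hmono (by omega) hz), ?_⟩, by abel⟩
      show f (x - z) = 0
      rw [map_sub, hzx, sub_self]
    · refine sup_le (fun x hx => ⟨hW (i - 1) x hx, hmono (by omega) hx⟩) ?_
      rintro x ⟨hx1, hx2⟩
      have hfx : f x = 0 := hx2
      refine ⟨?_, hx1⟩
      show f x ∈ W₂ (i - 1)
      rw [hfx]
      exact Submodule.zero_mem _
  have e5 := Submodule.finrank_sup_add_finrank_inf_eq (W₁ (i - 1)) (W₁ i ⊓ K)
  have e6 : W₁ (i - 1) ⊓ (W₁ i ⊓ K) = W₁ (i - 1) ⊓ K := by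
    apply le_antisymm
    · exact fun x hx => ⟨hx.1, hx.2.2⟩
    · exact fun x hx => ⟨hx.1, hmono (by omega) hx.1, hx.2⟩
  have e7 : finrank ℚ ↥Q₁ = finrank ℚ ↥(W₁ (i - 1)) := by
    rw [hQ₁, finrank_comap_subtype, inf_eq_left.mpr (hmono (by omega : i - 1 ≤ i))]
  have hb : finrank ℚ ↥(LinearMap.ker (grMap W₁ W₂ f hW i)) =
      finrank ℚ ↥(Submodule.map Q₁.mkQ S) := by rw [hker]
  have e4' : finrank ℚ ↥(Submodule.comap f (W₂ (i - 1)) ⊓ W₁ i) =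
      finrank ℚ ↥(W₁ (i - 1) ⊔ (W₁ i ⊓ K)) := by rw [e4]
  have hQ₁S' : finrank ℚ ↥(Q₁ ⊓ S) = finrank ℚ ↥Q₁ := by rw [hQ₁S]
  have e6' : finrank ℚ ↥(W₁ (i - 1) ⊓ (W₁ i ⊓ K)) =
      finrank ℚ ↥(W₁ (i - 1) ⊓ K) := by rw [e6]
  omega

end MHSAux

theorem stmt19 {V₁ V₂ : Type}
    [AddCommGroup V₁] [Module ℚ V₁] [FiniteDimensional ℚ V₁]
    [AddCommGroup V₂] [Module ℚ V₂] [FiniteDimensional ℚ V₂]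
    (W₁ : ℤ → Submodule ℚ V₁) (F₁ : ℤ → Submodule ℂ (ℂ ⊗[ℚ] V₁))
    (W₂ : ℤ → Submodule ℚ V₂) (F₂ : ℤ → Submodule ℂ (ℂ ⊗[ℚ] V₂))
    (h₁ : IsMHS W₁ F₁) (h₂ : IsMHS W₂ F₂)
    -- a morphism of mixed Hodge structures
    (f : V₁ →ₗ[ℚ] V₂)
    (hW : ∀ i : ℤ, ∀ x ∈ W₁ i, f x ∈ W₂ i)
    (hF : ∀ p : ℤ, Submodule.map (LinearMap.baseChange ℂ f) (F₁ p) ≤ F₂ p) :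
    -- strictness with respect to the weight filtration
    (∀ i : ℤ, LinearMap.range f ⊓ W₂ i = Submodule.map f (W₁ i)) ∧
    -- `Gr^W_i (ker f) ≅ ker (Gr^W_i f)`
    (∀ i : ℤ, Nonempty
      (grKer W₁ f i ≃ₗ[ℚ] LinearMap.ker (grMap W₁ W₂ f hW i))) ∧
    -- `Gr^W_i (coker f) ≅ coker (Gr^W_i f)`
    (∀ i : ℤ, Nonempty
      (grCoker W₂ f i ≃ₗ[ℚ]
        (GrW W₂ i ⧸ LinearMap.range (grMap W₁ W₂ f hW i)))) := by
  have hstrict : ∀ i : ℤ, LinearMap.range f ⊓ W₂ i = Submodule.map f (W₁ i) :=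
    MHSAux.strictness h₁ h₂ f hW hF
  refine ⟨hstrict, fun i => ?_, fun i => ?_⟩
  · -- kernel part
    apply FiniteDimensional.nonempty_linearEquiv_of_finrank_eq
    have e1 : Module.finrank ℚ (grKer W₁ f i) +
        Module.finrank ℚ ↥((W₁ (i - 1) ⊓ LinearMap.ker f) ⊓ (W₁ i ⊓ LinearMap.ker f)) =
        Module.finrank ℚ ↥(W₁ i ⊓ LinearMap.ker f) :=
      MHSAux.finrank_quot_comap _ _
    have hBA : (W₁ (i - 1) ⊓ LinearMap.ker f) ⊓ (W₁ i ⊓ LinearMap.ker f) =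
        W₁ (i - 1) ⊓ LinearMap.ker f :=
      inf_eq_left.mpr (inf_le_inf (h₁.mono (by omega)) le_rfl)
    have hBA' : Module.finrank ℚ ↥((W₁ (i - 1) ⊓ LinearMap.ker f) ⊓ (W₁ i ⊓ LinearMap.ker f)) =
        Module.finrank ℚ ↥(W₁ (i - 1) ⊓ LinearMap.ker f) := by rw [hBA]
    have e8 := MHSAux.ker_grMap_count W₁ W₂ f hW i h₁.mono (hstrict (i - 1))
    omega
  · -- cokernel part
    apply FiniteDimensional.nonempty_linearEquiv_of_finrank_eq
    have c1 : Module.finrank ℚ (grCoker W₂ f i) +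
        Module.finrank ℚ ↥(Submodule.map (LinearMap.range f).mkQ (W₂ (i - 1)) ⊓
          Submodule.map (LinearMap.range f).mkQ (W₂ i)) =
        Module.finrank ℚ ↥(Submodule.map (LinearMap.range f).mkQ (W₂ i)) :=
      MHSAux.finrank_quot_comap _ _
    have hMM : Submodule.map (LinearMap.range f).mkQ (W₂ (i - 1)) ⊓
        Submodule.map (LinearMap.range f).mkQ (W₂ i) =
        Submodule.map (LinearMap.range f).mkQ (W₂ (i - 1)) :=
      inf_eq_left.mpr (Submodule.map_mono (h₂.mono (by omega)))
    have hMM' : Module.finrank ℚ ↥(Submodule.map (LinearMap.range f).mkQ (W₂ (i - 1)) ⊓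
        Submodule.map (LinearMap.range f).mkQ (W₂ i)) =
        Module.finrank ℚ ↥(Submodule.map (LinearMap.range f).mkQ (W₂ (i - 1))) := by rw [hMM]
    have c2i := MHSAux.finrank_map_mkQ (LinearMap.range f) (W₂ i)
    have c2i1 := MHSAux.finrank_map_mkQ (LinearMap.range f) (W₂ (i - 1))
    have cs_i : Module.finrank ℚ ↥(LinearMap.range f ⊓ W₂ i) =
        Module.finrank ℚ ↥(Submodule.map f (W₁ i)) := by rw [hstrict i]
    have cs_i1 : Module.finrank ℚ ↥(LinearMap.range f ⊓ W₂ (i - 1)) =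
        Module.finrank ℚ ↥(Submodule.map f (W₁ (i - 1))) := by rw [hstrict (i - 1)]
    have c3 : ∀ j : ℤ, Module.finrank ℚ ↥(Submodule.map f (W₁ j)) +
        Module.finrank ℚ ↥(W₁ j ⊓ LinearMap.ker f) = Module.finrank ℚ ↥(W₁ j) := by
      intro j
      have hr := LinearMap.finrank_range_add_finrank_ker (f ∘ₗ (W₁ j).subtype)
      rw [LinearMap.range_comp, Submodule.range_subtype, LinearMap.ker_comp,
        MHSAux.finrank_comap_subtype] at hr
      have hcm : LinearMap.ker f ⊓ W₁ j = W₁ j ⊓ LinearMap.ker f := inf_comm _ _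
      rw [hcm] at hr
      exact hr
    have c4 := LinearMap.finrank_range_add_finrank_ker (grMap W₁ W₂ f hW i)
    have c5 : Module.finrank ℚ (GrW W₁ i) +
        Module.finrank ℚ ↥(W₁ (i - 1) ⊓ W₁ i) = Module.finrank ℚ ↥(W₁ i) :=
      MHSAux.finrank_quot_comap _ _
    have c5' : Module.finrank ℚ ↥(W₁ (i - 1) ⊓ W₁ i) = Module.finrank ℚ ↥(W₁ (i - 1)) := by
      rw [inf_eq_left.mpr (h₁.mono (by omega : i - 1 ≤ i))]
    have c6 : Module.finrank ℚ (GrW W₂ i) +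
        Module.finrank ℚ ↥(W₂ (i - 1) ⊓ W₂ i) = Module.finrank ℚ ↥(W₂ i) :=
      MHSAux.finrank_quot_comap _ _
    have c6' : Module.finrank ℚ ↥(W₂ (i - 1) ⊓ W₂ i) = Module.finrank ℚ ↥(W₂ (i - 1)) := by
      rw [inf_eq_left.mpr (h₂.mono (by omega : i - 1 ≤ i))]
    have cT := Submodule.finrank_quotient_add_finrank (LinearMap.range (grMap W₁ W₂ f hW i))
    have e8 := MHSAux.ker_grMap_count W₁ W₂ f hW i h₁.mono (hstrict (i - 1))
    have c3i := c3 i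
    have c3i1 := c3 (i - 1)
    omega
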